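/- For every nonnegative integer i, the Bernoulli polynomial satisfies B_i(x) = Σ_{k=0}^{i} (-1)^k (k!/(k+1)) R₂(i,k,x), where R₂(i,k,x) are Carlitz's weighted Stirling numbers of the second kind. -/

import Mathlib

/-!
Write `u = e^t - 1`, so that `t = log (1 + u) = ∑ (-1)^k u^(k+1) / (k+1)` and the generating
function `t e^(xt) / u` of the Bernoulli polynomials equals `e^(xt) ∑ (-1)^k u^k / (k+1)`. Since
`u^k` has order `k`, only the terms with `k ≤ i` contribute to the coefficient of `t^i`, which is
`B_i(x) / i!`; the coefficient of `t^i` in `e^(xt) u^k` is `k! R₂(i,k,x) / i!`.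

Instead of composing power series, truncate the logarithm after `u^(N+1)`: since `u' = 1 + u`,
the truncation `L` satisfies `L' = 1 - (-u)^(N+1)`, hence `L ≡ t` modulo `t^(N+2)`.
-/

open Finset PowerSeries

/-- Carlitz's weighted Stirling numbers of the second kind `R₂(m,k,x)`, defined by
`(1/k!) e^{xt}(e^t-1)^k = ∑_{m≥0} R₂(m,k,x) t^m/m!`. -/
noncomputable def R2 (m k : ℕ) (x : ℂ) : ℂ :=
  (Nat.factorial m : ℂ) / (Nat.factorial k : ℂ) *
    PowerSeries.coeff m
      (PowerSeries.rescale x (PowerSeries.exp ℂ) * (PowerSeries.exp ℂ - 1) ^ k)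

namespace PowerSeries

variable {A : Type*} [CommRing A] [Algebra ℚ A]

theorem X_dvd_exp_sub_one : (X : A⟦X⟧) ∣ exp A - 1 :=
  X_dvd_iff.mpr (by simp [constantCoeff_exp])

theorem exists_isUnit_exp_sub_one_eq_X_mul : ∃ v : A⟦X⟧, IsUnit v ∧ exp A - 1 = X * v := by
  obtain ⟨v, hv⟩ := X_dvd_exp_sub_one (A := A)
  refine ⟨v, isUnit_iff_constantCoeff.mpr ?_, hv⟩
  have h1 := congrArg (coeff 1) hv
  rw [coeff_succ_X_mul, coeff_zero_eq_constantCoeff_apply] at h1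
  simp [← h1, coeff_one]

theorem X_pow_dvd_of_X_pow_succ_dvd_mul_exp_sub_one {f : A⟦X⟧} {n : ℕ}
    (h : X ^ (n + 1) ∣ f * (exp A - 1)) : X ^ n ∣ f := by
  obtain ⟨v, hv, hexp⟩ := exists_isUnit_exp_sub_one_eq_X_mul (A := A)
  obtain ⟨c, hc⟩ := h
  refine hv.dvd_mul_right.mp ⟨c, X_mul_cancel ?_⟩
  rw [← mul_assoc, mul_comm X f, mul_assoc, ← hexp, hc, pow_succ', mul_assoc]

theorem X_pow_succ_dvd_of_X_pow_dvd_derivative {f : A⟦X⟧} {n : ℕ}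
    (hf : constantCoeff f = 0) (h : X ^ n ∣ d⁄dX A f) : X ^ (n + 1) ∣ f := by
  rw [X_pow_dvd_iff] at h ⊢
  rintro (_ | m) hm
  · rwa [coeff_zero_eq_constantCoeff_apply]
  · have hunit : IsUnit ((m + 1 : ℕ) : A) := by
      simpa using (Nat.cast_add_one_ne_zero (R := ℚ) m).isUnit.map (algebraMap ℚ A)
    have hcoeff := h m (by omega)
    rw [coeff_derivative] at hcoeff
    exact hunit.mul_left_eq_zero.mp (mod_cast hcoeff)

variable (A) in
/-- The truncation at `u^N` of `log (1 + u) / u = ∑ (-1)^k u^k / (k+1)`, at `u = e^X - 1`. -/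
noncomputable def logQuotTrunc (N : ℕ) : A⟦X⟧ :=
  ∑ k ∈ range (N + 1), ((-1) ^ k / (k + 1) : ℚ) • (exp A - 1) ^ k

theorem derivative_logQuotTrunc_mul_exp_sub_one (N : ℕ) :
    d⁄dX A (logQuotTrunc A N * (exp A - 1)) = 1 - (-(exp A - 1)) ^ (N + 1) := by
  have hterm (k : ℕ) : d⁄dX A (((-1) ^ k / (k + 1) : ℚ) • (exp A - 1) ^ (k + 1)) =
      (-(exp A - 1)) ^ k - (-(exp A - 1)) ^ (k + 1) := by
    rw [Derivation.map_smul_of_tower, Derivation.leibniz_pow, map_sub, derivative_exp,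
      Derivation.map_one_eq_zero, sub_zero, Nat.add_sub_cancel, smul_eq_mul,
      ← Nat.cast_smul_eq_nsmul ℚ, smul_smul]
    have hscalar : ((-1) ^ k / (k + 1) * ((k + 1 : ℕ) : ℚ)) = (-1) ^ k := by
      push_cast
      field_simp
    rw [hscalar, Algebra.smul_def, map_pow, map_neg, map_one, pow_succ (-(exp A - 1)),
      neg_pow (exp A - 1)]
    linear_combination (-1) ^ k * (exp A - 1) ^ k * (sub_add_cancel (exp A) 1).symm
  rw [logQuotTrunc, sum_mul]
  simp_rw [smul_mul_assoc, ← pow_succ, map_sum, hterm]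
  rw [sum_range_sub']
  simp

theorem X_pow_dvd_logQuotTrunc_mul_exp_sub_one_sub_X (N : ℕ) :
    X ^ (N + 2) ∣ logQuotTrunc A N * (exp A - 1) - X := by
  apply X_pow_succ_dvd_of_X_pow_dvd_derivative
  · simp [constantCoeff_exp]
  · rw [map_sub, derivative_logQuotTrunc_mul_exp_sub_one, derivative_X, sub_sub_cancel_left,
      dvd_neg]
    exact pow_dvd_pow_of_dvd (dvd_neg.mpr X_dvd_exp_sub_one) _

theorem X_pow_dvd_rescale_exp_mul_logQuotTrunc_sub_bernoulli (t : A) (N : ℕ) :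
    X ^ (N + 1) ∣ rescale t (exp A) * logQuotTrunc A N -
      mk fun n => Polynomial.aeval t ((1 / n.factorial : ℚ) • Polynomial.bernoulli n) := by
  apply X_pow_dvd_of_X_pow_succ_dvd_mul_exp_sub_one
  rw [sub_mul, Polynomial.bernoulli_generating_function, mul_assoc, mul_comm X, ← mul_sub]
  exact dvd_mul_of_dvd_right (X_pow_dvd_logQuotTrunc_mul_exp_sub_one_sub_X N) _

theorem aeval_bernoulli_eq_sum (t : A) (n : ℕ) :
    Polynomial.aeval t (Polynomial.bernoulli n) = (n.factorial : A) *
      ∑ k ∈ range (n + 1),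
        ((-1) ^ k / (k + 1) : ℚ) • coeff n (rescale t (exp A) * (exp A - 1) ^ k) := by
  have h := X_pow_dvd_iff.mp (X_pow_dvd_rescale_exp_mul_logQuotTrunc_sub_bernoulli t n) n
    n.lt_succ_self
  rw [map_sub, coeff_mk, sub_eq_zero, logQuotTrunc, mul_sum, map_sum, map_smul] at h
  simp_rw [mul_smul_comm, LinearMap.map_smul_of_tower] at h
  rw [h, Algebra.smul_def, ← mul_assoc, ← map_natCast (algebraMap ℚ A), ← map_mul,
    mul_one_div_cancel (by positivity), map_one, one_mul]

end PowerSeries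

theorem bernoulli_eq_alternating_R2_sum (i : ℕ) (x : ℂ) :
    Polynomial.aeval x (Polynomial.bernoulli i) =
      ∑ k ∈ Finset.range (i + 1),
        (-1) ^ k * (Nat.factorial k : ℂ) / ((k : ℂ) + 1) * R2 i k x := by
  rw [aeval_bernoulli_eq_sum, mul_sum]
  refine sum_congr rfl fun k _ => ?_
  have hk : (k.factorial : ℂ) ≠ 0 := mod_cast k.factorial_ne_zero
  rw [R2, Rat.smul_def]
  push_cast
  field_simp
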